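/- arXiv:1904.04171 — 2 statements merged into one kernel-verified Lean document; each statement's English description precedes it below -/
import Mathlib

section
/- Let $X$ be a Polish space, $Y$ a Polish space, $r\geq 1$, and $C : X \times \mathcal{P}_r(Y) \to \mathbb{R}$ continuous (with $\mathcal{P}_r(Y)$ carrying the $\mathcal{W}_r$-topology). For $\epsilon \geq 0$ and $N \in \mathbb{N}$, the set $\Gamma_N^\epsilon$ of all tuples $(x_1,p_1),\ldots,(x_N,p_N) \in (X\times\mathcal{P}_r(Y))^N$ such that for all $m_1,\ldots,m_N \in \mathcal{P}_r(Y)$ with $\sum_{i=1}^N p_i = \sum_{i=1}^N m_i$ one has $\sum_{i=1}^N C(x_i,p_i) \leq \sum_{i=1}^N C(x_i,m_i) + \epsilon$, is closed in $(X\times\mathcal{P}_r(Y))^N$. -/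
open MeasureTheory Filter Topology

noncomputable section

/-- A coupling of `μ` and `ν`: a measure on the product with the given marginals. -/
def IsCoupling {X Y : Type*} [MeasurableSpace X] [MeasurableSpace Y]
    (π : Measure (X × Y)) (μ : Measure X) (ν : Measure Y) : Prop :=
  π.map Prod.fst = μ ∧ π.map Prod.snd = ν

/-- `WrPow r p q` is the `r`-th power of the `r`-Wasserstein distance:
`inf { ∫ d(y₁,y₂)^r dπ : π coupling of p, q }`. -/
noncomputable def WrPow {Y : Type*} [MeasurableSpace Y] [PseudoMetricSpace Y]
    (r : ℝ) (p q : Measure Y) : ℝ :=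
  sInf {v | ∃ π : Measure (Y × Y), IsCoupling π p q ∧ v = ∫ z, dist z.1 z.2 ^ r ∂π}

/-- Convergence in the `r`-Wasserstein metric. -/
def TendstoWr {Y : Type*} [MeasurableSpace Y] [PseudoMetricSpace Y]
    (r : ℝ) (pk : ℕ → Measure Y) (p : Measure Y) : Prop :=
  Tendsto (fun k => WrPow r (pk k) p) atTop (nhds 0)

/-- Finite `r`-th moment. -/
def FiniteMomentR {Y : Type*} [MeasurableSpace Y] [PseudoMetricSpace Y]
    (r : ℝ) (p : Measure Y) : Prop :=
  ∃ y0 : Y, Integrable (fun y => dist y y0 ^ r) p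

/-- Membership in `𝒫_r(Y)`: a probability measure with finite `r`-th moment. -/
def MemPr {Y : Type*} [MeasurableSpace Y] [PseudoMetricSpace Y]
    (r : ℝ) (p : Measure Y) : Prop :=
  IsProbabilityMeasure p ∧ FiniteMomentR r p

/-- The set `Γ_N^ε` of `N`-tuples satisfying the `ε`-relaxed `C`-monotonicity inequality. -/
def GammaNEps {X Y : Type*} [MeasurableSpace Y] [PseudoMetricSpace Y]
    (C : X → Measure Y → ℝ) (r ε : ℝ) (N : ℕ) :
    Set ((Fin N → X) × (Fin N → Measure Y)) :=
  {xp | (∀ i, MemPr r (xp.2 i)) ∧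
    ∀ m : Fin N → Measure Y, (∀ i, MemPr r (m i)) →
      (∑ i, xp.2 i) = (∑ i, m i) →
      (∑ i, C (xp.1 i) (xp.2 i)) ≤ (∑ i, C (xp.1 i) (m i)) + ε}

open scoped ENNReal

/-! Given a competitor `m` for the limit tuple `p`, build competitors `mᵏ` for the approximating
tuples `pᵏ`: glue near-optimal couplings of `pᵏⱼ` and `pⱼ` into one coupling of `∑ pᵏ` and
`∑ p = ∑ m`, split it according to the densities `dmᵢ / d(∑ p)` of the second coordinate, and
take first marginals. Then `∑ mᵏ = ∑ pᵏ` and `W_r(mᵏᵢ, mᵢ)^r ≤ ∑ⱼ (W_r(pᵏⱼ, pⱼ)^r + 1/(k+1)) → 0`,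
so the inequalities defining `Γ_N^ε` for the `k`-th tuple pass to the limit by continuity of `C`.
-/

namespace MeasureTheory.Measure

variable {α β ι : Type*} [MeasurableSpace α] [MeasurableSpace β]

lemma withDensity_finsetSum (μ : Measure α) (s : Finset ι) {f : ι → α → ℝ≥0∞}
    (hf : ∀ i, Measurable (f i)) :
    μ.withDensity (fun a => ∑ i ∈ s, f i a) = ∑ i ∈ s, μ.withDensity (f i) := by
  classical
  induction s using Finset.induction with
  | empty => simp
  | insert i s hi ih =>
    simp only [Finset.sum_insert hi, ← ih]
    exact withDensity_add_left (hf i) _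

lemma map_withDensity_comp (μ : Measure α) {f : α → β} (hf : Measurable f) {g : β → ℝ≥0∞}
    (hg : Measurable g) : (μ.withDensity (g ∘ f)).map f = (μ.map f).withDensity g := by
  ext s hs
  rw [map_apply hf hs, withDensity_apply _ (hf hs), withDensity_apply _ hs,
    setLIntegral_map hs hg hf, Function.comp_def]

lemma single_le_sum [Fintype ι] {m : ι → Measure α} (i : ι) : m i ≤ ∑ j, m j :=
  Finset.single_le_sum (fun j _ => Measure.zero_le (m j)) (Finset.mem_univ i)

lemma ae_sum_rnDeriv_eq_one [Fintype ι] {ν : Measure α} [IsFiniteMeasure ν]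
    {m : ι → Measure α} (hm : ∑ i, m i = ν) : ∀ᵐ a ∂ν, ∑ i, (m i).rnDeriv ν a = 1 := by
  have hle (i : ι) : m i ≤ ν := hm ▸ single_le_sum i
  have : ∀ i, IsFiniteMeasure (m i) := fun i => isFiniteMeasure_of_le ν (hle i)
  have hmeas : Measurable fun a => ∑ i, (m i).rnDeriv ν a :=
    Finset.measurable_sum _ fun i _ => measurable_rnDeriv _ _
  have hsum : ν.withDensity (fun a => ∑ i, (m i).rnDeriv ν a) = ν := by
    rw [withDensity_finsetSum _ _ fun i => measurable_rnDeriv _ _]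
    simp_rw [withDensity_rnDeriv_eq _ _ (hle _).absolutelyContinuous, hm]
  filter_upwards [rnDeriv_withDensity ν hmeas, rnDeriv_self ν] with a h₁ h₂
  rw [← h₁, hsum, h₂]

theorem exists_sum_eq_and_map_snd_eq [Fintype ι] (P : Measure (α × β)) [IsFiniteMeasure P]
    {m : ι → Measure β} (hm : ∑ i, m i = P.map Prod.snd) :
    ∃ Q : ι → Measure (α × β), ∑ i, Q i = P ∧ ∀ i, (Q i).map Prod.snd = m i := by
  set ν := P.map Prod.snd
  have hle (i : ι) : m i ≤ ν := hm ▸ single_le_sum i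
  have : ∀ i, IsFiniteMeasure (m i) := fun i => isFiniteMeasure_of_le ν (hle i)
  refine ⟨fun i => P.withDensity ((m i).rnDeriv ν ∘ Prod.snd), ?_, fun i => ?_⟩
  · have hone : ∀ᵐ z ∂P, ∑ i, ((m i).rnDeriv ν ∘ Prod.snd) z = 1 :=
      ae_of_ae_map measurable_snd.aemeasurable (ae_sum_rnDeriv_eq_one hm)
    rw [← withDensity_finsetSum _ _ fun i => (measurable_rnDeriv _ _).comp measurable_snd,
      withDensity_congr_ae hone]
    exact withDensity_one
  · rw [map_withDensity_comp _ measurable_snd (measurable_rnDeriv _ _),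
      withDensity_rnDeriv_eq _ _ (hle i).absolutelyContinuous]

end MeasureTheory.Measure

lemma integrable_rpow_iff_memLp {α : Type*} [MeasurableSpace α] {μ : Measure α} {f : α → ℝ}
    {r : ℝ} (hr : 0 < r) (hf₀ : ∀ a, 0 ≤ f a) (hf : AEStronglyMeasurable f μ) :
    Integrable (fun a => f a ^ r) μ ↔ MemLp f (ENNReal.ofReal r) μ := by
  rw [← integrable_norm_rpow_iff hf (by simpa using hr) ENNReal.ofReal_ne_top,
    ENNReal.toReal_ofReal hr.le]
  simp only [Real.norm_eq_abs, abs_of_nonneg (hf₀ _)]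

lemma isCoupling_prod {X Y : Type*} [MeasurableSpace X] [MeasurableSpace Y] (μ : Measure X)
    (ν : Measure Y) [IsProbabilityMeasure μ] [IsProbabilityMeasure ν] :
    IsCoupling (μ.prod ν) μ ν := by
  simp [IsCoupling]

section Wasserstein

variable {Y : Type*} [MeasurableSpace Y] [PseudoMetricSpace Y] {r : ℝ}

lemma integral_rpow_dist_nonneg (r : ℝ) (π : Measure (Y × Y)) :
    0 ≤ ∫ z, dist z.1 z.2 ^ r ∂π :=
  integral_nonneg fun _ => Real.rpow_nonneg dist_nonneg r

lemma wrPow_nonneg (r : ℝ) (p q : Measure Y) : 0 ≤ WrPow r p q :=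
  Real.sInf_nonneg (by rintro _ ⟨π, -, rfl⟩; exact integral_rpow_dist_nonneg r π)

lemma IsCoupling.wrPow_le {π : Measure (Y × Y)} {p q : Measure Y} (hπ : IsCoupling π p q) :
    WrPow r p q ≤ ∫ z, dist z.1 z.2 ^ r ∂π :=
  csInf_le ⟨0, by rintro _ ⟨π, -, rfl⟩; exact integral_rpow_dist_nonneg r π⟩ ⟨π, hπ, rfl⟩

lemma exists_isCoupling_integral_lt (p q : Measure Y) [IsProbabilityMeasure p]
    [IsProbabilityMeasure q] {δ : ℝ} (hδ : 0 < δ) :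
    ∃ π, IsCoupling π p q ∧ ∫ z, dist z.1 z.2 ^ r ∂π < WrPow r p q + δ := by
  obtain ⟨_, ⟨π, hπ, rfl⟩, hlt⟩ := Real.lt_sInf_add_pos
    (s := {v | ∃ π, IsCoupling π p q ∧ v = ∫ z, dist z.1 z.2 ^ r ∂π})
    ⟨_, _, isCoupling_prod p q, rfl⟩ hδ
  exact ⟨π, hπ, hlt⟩

lemma TendstoWr.exists_isCoupling {pk : ℕ → Measure Y} {p : Measure Y} (h : TendstoWr r pk p)
    (hpk : ∀ k, IsProbabilityMeasure (pk k)) [IsProbabilityMeasure p] :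
    ∃ π : ℕ → Measure (Y × Y), (∀ k, IsCoupling (π k) (pk k) p) ∧
      Tendsto (fun k => ∫ z, dist z.1 z.2 ^ r ∂π k) atTop (𝓝 0) := by
  choose π hπ hlt using fun k : ℕ =>
    exists_isCoupling_integral_lt (r := r) (pk k) p (Nat.one_div_pos_of_nat (n := k))
  refine ⟨π, hπ, squeeze_zero (fun k => integral_rpow_dist_nonneg r (π k))
    (fun k => (hlt k).le) ?_⟩
  simpa using h.add tendsto_one_div_add_atTop_nhds_zero_nat

variable [OpensMeasurableSpace Y]

lemma memLp_dist_iff_integrable {μ : Measure Y} (hr : 0 < r) (y₀ : Y) :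
    MemLp (fun y => dist y y₀) (ENNReal.ofReal r) μ ↔ Integrable (fun y => dist y y₀ ^ r) μ :=
  (integrable_rpow_iff_memLp hr (fun _ => dist_nonneg)
    (continuous_id.dist continuous_const).aestronglyMeasurable).symm

lemma FiniteMomentR.memLp_dist {μ : Measure Y} [IsFiniteMeasure μ] (hr : 0 < r)
    (h : FiniteMomentR r μ) (y₀ : Y) : MemLp (fun y => dist y y₀) (ENNReal.ofReal r) μ := by
  obtain ⟨y₁, hy₁⟩ := h
  refine (((memLp_dist_iff_integrable hr y₁).2 hy₁).add (memLp_const (dist y₁ y₀))).mono'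
    (continuous_id.dist continuous_const).aestronglyMeasurable (ae_of_all _ fun y => ?_)
  rw [Real.norm_of_nonneg dist_nonneg]
  exact dist_triangle _ _ _

lemma FiniteMomentR.integrable_rpow_dist {μ : Measure Y} [IsFiniteMeasure μ] (hr : 0 < r)
    (h : FiniteMomentR r μ) (y₀ : Y) : Integrable (fun y => dist y y₀ ^ r) μ :=
  (memLp_dist_iff_integrable hr y₀).1 (h.memLp_dist hr y₀)

lemma IsCoupling.integrable_rpow_dist [SecondCountableTopology Y] {π : Measure (Y × Y)}
    {p q : Measure Y} [IsFiniteMeasure p] [IsFiniteMeasure q] (hr : 0 < r)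
    (hπ : IsCoupling π p q) (hp : FiniteMomentR r p) (hq : FiniteMomentR r q) :
    Integrable (fun z : Y × Y => dist z.1 z.2 ^ r) π := by
  have ⟨y₀, _⟩ := hp
  have h₁ : MemLp (fun y => dist y y₀) (ENNReal.ofReal r) (π.map Prod.fst) :=
    hπ.1 ▸ hp.memLp_dist hr y₀
  have h₂ : MemLp (fun y => dist y y₀) (ENNReal.ofReal r) (π.map Prod.snd) :=
    hπ.2 ▸ hq.memLp_dist hr y₀
  refine (integrable_rpow_iff_memLp hr (fun _ => dist_nonneg)
    continuous_dist.aestronglyMeasurable).2 <|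
    ((h₁.comp_of_map measurable_fst.aemeasurable).add
      (h₂.comp_of_map measurable_snd.aemeasurable)).mono'
    continuous_dist.aestronglyMeasurable (ae_of_all _ fun z => ?_)
  rw [Real.norm_of_nonneg dist_nonneg]
  exact dist_triangle_right _ _ _

theorem exists_sum_eq_wrPow_le [SecondCountableTopology Y] {ι : Type*} [Fintype ι] (hr : 0 < r)
    {μ p m : ι → Measure Y} {π : ι → Measure (Y × Y)} (hμ : ∀ i, MemPr r (μ i))
    (hp : ∀ i, MemPr r (p i)) (hm : ∀ i, IsProbabilityMeasure (m i))
    (hπ : ∀ i, IsCoupling (π i) (μ i) (p i)) (hpm : ∑ i, p i = ∑ i, m i) :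
    ∃ ν : ι → Measure Y, (∀ i, MemPr r (ν i)) ∧ ∑ i, μ i = ∑ i, ν i ∧
      ∀ i, WrPow r (ν i) (m i) ≤ ∑ j, ∫ z, dist z.1 z.2 ^ r ∂π j := by
  have (i : ι) : IsProbabilityMeasure (μ i) := (hμ i).1
  have (i : ι) : IsProbabilityMeasure (p i) := (hp i).1
  have (i : ι) : IsProbabilityMeasure (π i) :=
    (Measure.isProbabilityMeasure_map_iff measurable_fst.aemeasurable).1 ((hπ i).1 ▸ (hμ i).1)
  set P := ∑ j, π j
  have hP₁ : P.map Prod.fst = ∑ j, μ j := by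
    rw [Measure.map_finset_sum' measurable_fst.aemeasurable]
    exact Finset.sum_congr rfl fun j _ => (hπ j).1
  have hP₂ : P.map Prod.snd = ∑ j, m j := by
    rw [Measure.map_finset_sum' measurable_snd.aemeasurable, ← hpm]
    exact Finset.sum_congr rfl fun j _ => (hπ j).2
  obtain ⟨Q, hQP, hQm⟩ := Measure.exists_sum_eq_and_map_snd_eq P hP₂.symm
  have hQP_le (i : ι) : Q i ≤ P := hQP ▸ Measure.single_le_sum i
  refine ⟨fun i => (Q i).map Prod.fst, fun i => ⟨?_, ?_⟩, ?_, fun i => ?_⟩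
  · have : IsProbabilityMeasure (Q i) :=
      (Measure.isProbabilityMeasure_map_iff measurable_snd.aemeasurable).1 (hQm i ▸ hm i)
    exact Measure.isProbabilityMeasure_map measurable_fst.aemeasurable
  · have ⟨y₀, _⟩ := (hμ i).2
    refine ⟨y₀, Integrable.mono_measure ?_ (hP₁ ▸ Measure.map_mono (hQP_le i) measurable_fst)⟩
    exact integrable_finsetSum_measure.2 fun j _ => (hμ j).2.integrable_rpow_dist hr y₀
  · rw [← hP₁, ← hQP, Measure.map_finset_sum' measurable_fst.aemeasurable]
  · have hcost (j : ι) : Integrable (fun z : Y × Y => dist z.1 z.2 ^ r) (π j) :=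
      (hπ j).integrable_rpow_dist hr (hμ j).2 (hp j).2
    calc WrPow r ((Q i).map Prod.fst) (m i) ≤ ∫ z, dist z.1 z.2 ^ r ∂Q i :=
          IsCoupling.wrPow_le ⟨rfl, hQm i⟩
      _ ≤ ∫ z, dist z.1 z.2 ^ r ∂P :=
          integral_mono_measure (hQP_le i) (ae_of_all _ fun _ => Real.rpow_nonneg dist_nonneg r)
            (integrable_finsetSum_measure.2 fun j _ => hcost j)
      _ = ∑ j, ∫ z, dist z.1 z.2 ^ r ∂π j := integral_finsetSum_measure fun j _ => hcost j

theorem exists_tendstoWr_of_sum_eq [SecondCountableTopology Y] {ι : Type*} [Fintype ι]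
    (hr : 0 < r) {pk : ℕ → ι → Measure Y} {p m : ι → Measure Y} (hpk : ∀ k i, MemPr r (pk k i))
    (hp : ∀ i, MemPr r (p i)) (hm : ∀ i, IsProbabilityMeasure (m i))
    (hconv : ∀ i, TendstoWr r (fun k => pk k i) (p i)) (hpm : ∑ i, p i = ∑ i, m i) :
    ∃ mk : ℕ → ι → Measure Y, (∀ k i, MemPr r (mk k i)) ∧ (∀ k, ∑ i, pk k i = ∑ i, mk k i) ∧
      ∀ i, TendstoWr r (fun k => mk k i) (m i) := by
  have (i : ι) : IsProbabilityMeasure (p i) := (hp i).1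
  choose π hπ hπ_cost using fun i => (hconv i).exists_isCoupling fun k => (hpk k i).1
  choose mk hmk hsum hW using fun k =>
    exists_sum_eq_wrPow_le hr (hpk k) hp hm (fun i => hπ i k) hpm
  refine ⟨mk, hmk, hsum, fun i => squeeze_zero (fun k => wrPow_nonneg _ _ _) (fun k => hW k i) ?_⟩
  simpa using tendsto_finsetSum Finset.univ fun j _ => hπ_cost j

end Wasserstein

/-- Sequential form of the closedness of `Γ_N^ε`. -/
theorem gammaNEps_closed_general {X Y : Type*}
    [TopologicalSpace X]
    [MeasurableSpace Y] [MetricSpace Y] [PolishSpace Y] [BorelSpace Y]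
    (r : ℝ) (hr : 1 ≤ r)
    (C : X → Measure Y → ℝ)
    (hC : ∀ (x : X) (p : Measure Y) (xk : ℕ → X) (pk : ℕ → Measure Y),
      MemPr r p → (∀ k, MemPr r (pk k)) →
      Tendsto xk atTop (nhds x) → TendstoWr r pk p →
      Tendsto (fun k => C (xk k) (pk k)) atTop (nhds (C x p)))
    (ε : ℝ) (N : ℕ)
    (xk : ℕ → Fin N → X) (pk : ℕ → Fin N → Measure Y)
    (hmem : ∀ k, (xk k, pk k) ∈ GammaNEps C r ε N)
    (x : Fin N → X) (p : Fin N → Measure Y)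
    (hp : ∀ i, MemPr r (p i))
    (hxconv : ∀ i, Tendsto (fun k => xk k i) atTop (nhds (x i)))
    (hpconv : ∀ i, TendstoWr r (fun k => pk k i) (p i)) :
    (x, p) ∈ GammaNEps C r ε N := by
  refine ⟨hp, fun m hm hpm => ?_⟩
  obtain ⟨mk, hmk, hsum, hmk_conv⟩ := exists_tendstoWr_of_sum_eq (by linarith)
    (fun k => (hmem k).1) hp (fun i => (hm i).1) hpconv hpm
  have hlhs : Tendsto (fun k => ∑ i, C (xk k i) (pk k i)) atTop (𝓝 (∑ i, C (x i) (p i))) :=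
    tendsto_finsetSum _ fun i _ =>
      hC _ _ _ _ (hp i) (fun k => (hmem k).1 i) (hxconv i) (hpconv i)
  have hrhs : Tendsto (fun k => ∑ i, C (xk k i) (mk k i) + ε) atTop
      (𝓝 (∑ i, C (x i) (m i) + ε)) :=
    (tendsto_finsetSum _ fun i _ =>
      hC _ _ _ _ (hm i) (fun k => hmk k i) (hxconv i) (hmk_conv i)).add_const ε
  exact le_of_tendsto_of_tendsto' hlhs hrhs fun k => (hmem k).2 (mk k) (hmk k) (hsum k)

/-- **Closedness of `Γ_N^ε`** (Lemma 3.4), stated sequentially: any limit (in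
`X`-topology and in `W_r`) of tuples in `Γ_N^ε` again lies in `Γ_N^ε`. -/
theorem gammaNEps_closed {X Y : Type*}
    [TopologicalSpace X] [PolishSpace X]
    [MeasurableSpace Y] [MetricSpace Y] [PolishSpace Y] [BorelSpace Y]
    (r : ℝ) (hr : 1 ≤ r)
    (C : X → Measure Y → ℝ)
    (hC : ∀ (x : X) (p : Measure Y) (xk : ℕ → X) (pk : ℕ → Measure Y),
      MemPr r p → (∀ k, MemPr r (pk k)) →
      Tendsto xk atTop (nhds x) → TendstoWr r pk p →
      Tendsto (fun k => C (xk k) (pk k)) atTop (nhds (C x p)))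
    (ε : ℝ) (hε : 0 ≤ ε) (N : ℕ)
    (xk : ℕ → Fin N → X) (pk : ℕ → Fin N → Measure Y)
    (hmem : ∀ k, (xk k, pk k) ∈ GammaNEps C r ε N)
    (x : Fin N → X) (p : Fin N → Measure Y)
    (hp : ∀ i, MemPr r (p i))
    (hxconv : ∀ i, Tendsto (fun k => xk k i) atTop (nhds (x i)))
    (hpconv : ∀ i, TendstoWr r (fun k => pk k i) (p i)) :
    (x, p) ∈ GammaNEps C r ε N :=
  gammaNEps_closed_general r hr C hC ε N xk pk hmem x p hp hxconv hpconv
end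
end

section
/- Let $Y$ be a Polish space, $r \geq 1$, $p, q \in \mathcal{P}_r(Y)$, $\chi \in \Pi(q, p)$ a $\mathcal{W}_r$-optimal coupling with disintegration $(\chi_z)_{z\in Y}$ with respect to its first marginal $q$. For sub-probability measures $m_1,\ldots,m_N$ on $Y$ with $\sum_{i=1}^N m_i = q$, define $\chi m_i(dy) := \int_Y \chi_z(dy)\, m_i(dz)$. Then $\sum_{i=1}^N \mathcal{W}_r(\chi m_i / m_i(Y),\ m_i / m_i(Y))^r \, m_i(Y) \leq \mathcal{W}_r(p,q)^r$ and $\sum_{i=1}^N \chi m_i = p$. -/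
/-!
Disintegrate the optimal coupling as `χ = q ⊗ₘ κ` with `κ = χ.condKernel`. Since `q = ∑ mᵢ`,
this splits as `χ = ∑ mᵢ ⊗ₘ κ`, and the second marginal gives `p = ∑ κ ∘ₘ mᵢ`. After
normalization, each piece `mᵢ ⊗ₘ κ` is a coupling of `mᵢ` and `κ ∘ₘ mᵢ`, so
`mᵢ(Y) · W_r(κ ∘ₘ mᵢ / mᵢ(Y), mᵢ / mᵢ(Y))^r` is at most its transport cost; these costs add up
to the cost of `χ`, which is `W_r(p, q)^r` by optimality. Finite `r`-th moments of the marginals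
make the cost integrable, so that the cost integral over `χ` splits over the finite sum.
-/

open MeasureTheory Filter Topology

noncomputable section

open ProbabilityTheory Set
open scoped ENNReal NNReal

section Coupling

variable {X Y : Type*} [MeasurableSpace X] [MeasurableSpace Y]
  {π : Measure (X × Y)} {μ : Measure X} {ν : Measure Y}

lemma IsCoupling.map_swap (h : IsCoupling π μ ν) : IsCoupling (π.map Prod.swap) ν μ :=
  ⟨by rw [Measure.map_map measurable_fst measurable_swap]; exact h.2,
    by rw [Measure.map_map measurable_snd measurable_swap]; exact h.1⟩

lemma IsCoupling.smul (c : ℝ≥0∞) (h : IsCoupling π μ ν) : IsCoupling (c • π) (c • μ) (c • ν) :=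
  ⟨by rw [Measure.map_smul, h.1], by rw [Measure.map_smul, h.2]⟩

end Coupling

lemma dist_rpow_le {Y : Type*} [PseudoMetricSpace Y] {r : ℝ} (hr : 1 ≤ r) (x y z : Y) :
    dist x z ^ r ≤ 2 ^ (r - 1) * (dist x y ^ r + dist y z ^ r) := by
  have h := NNReal.rpow_add_le_mul_rpow_add_rpow (nndist x y) (nndist y z) hr
  calc dist x z ^ r ≤ (dist x y + dist y z) ^ r :=
        Real.rpow_le_rpow dist_nonneg (dist_triangle x y z) (by linarith)
    _ ≤ 2 ^ (r - 1) * (dist x y ^ r + dist y z ^ r) := by exact_mod_cast h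

section Wasserstein

variable {Y : Type*} [MeasurableSpace Y] [PseudoMetricSpace Y]

lemma integral_dist_rpow_map_swap (r : ℝ) (π : Measure (Y × Y)) :
    ∫ z, dist z.1 z.2 ^ r ∂(π.map Prod.swap) = ∫ z, dist z.1 z.2 ^ r ∂π := by
  refine (integral_map_equiv MeasurableEquiv.prodComm _).trans ?_
  congr with z
  exact congrArg (· ^ r) (dist_comm z.2 z.1)

lemma wrPow_comm (r : ℝ) (p q : Measure Y) : WrPow r p q = WrPow r q p := by
  unfold WrPow
  congr 1
  ext v
  constructor <;>
  · rintro ⟨π, hπ, rfl⟩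
    exact ⟨π.map Prod.swap, hπ.map_swap, (integral_dist_rpow_map_swap r π).symm⟩

lemma wrPow_le_integral {r : ℝ} {p q : Measure Y} {π : Measure (Y × Y)} (hπ : IsCoupling π p q) :
    WrPow r p q ≤ ∫ z, dist z.1 z.2 ^ r ∂π := by
  refine csInf_le ⟨0, ?_⟩ ⟨π, hπ, rfl⟩
  rintro _ ⟨π', -, rfl⟩
  exact integral_nonneg fun z ↦ Real.rpow_nonneg dist_nonneg r

lemma toReal_mul_wrPow_normalize_le_integral (r : ℝ) (π : Measure (Y × Y)) :
    (π univ).toReal * WrPow r ((π univ)⁻¹ • π.map Prod.fst) ((π univ)⁻¹ • π.map Prod.snd) ≤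
      ∫ z, dist z.1 z.2 ^ r ∂π := by
  rcases eq_or_ne (π univ).toReal 0 with hc | hc
  · rw [hc, zero_mul]
    exact integral_nonneg fun z ↦ Real.rpow_nonneg dist_nonneg r
  have hπ : IsCoupling π (π.map Prod.fst) (π.map Prod.snd) := ⟨rfl, rfl⟩
  calc (π univ).toReal * WrPow r ((π univ)⁻¹ • π.map Prod.fst) ((π univ)⁻¹ • π.map Prod.snd)
      ≤ (π univ).toReal * ∫ z, dist z.1 z.2 ^ r ∂((π univ)⁻¹ • π) := by
        gcongr
        exact wrPow_le_integral (hπ.smul _)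
    _ = ∫ z, dist z.1 z.2 ^ r ∂π := by
        rw [integral_smul_measure, ENNReal.toReal_inv, smul_eq_mul, ← mul_assoc,
          mul_inv_cancel₀ hc, one_mul]

lemma toReal_mul_wrPow_comp_le_integral_compProd (r : ℝ) (μ : Measure Y) [SFinite μ]
    (κ : Kernel Y Y) [IsMarkovKernel κ] :
    (μ univ).toReal * WrPow r ((μ univ)⁻¹ • κ ∘ₘ μ) ((μ univ)⁻¹ • μ) ≤
      ∫ z, dist z.1 z.2 ^ r ∂(μ ⊗ₘ κ) := by
  have h := toReal_mul_wrPow_normalize_le_integral r (μ ⊗ₘ κ)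
  rwa [Measure.compProd_apply_univ, ← Measure.fst, ← Measure.snd, Measure.fst_compProd,
    Measure.snd_compProd, wrPow_comm] at h

variable [SecondCountableTopology Y] [OpensMeasurableSpace Y]

lemma FiniteMomentR.integrable_dist_rpow {r : ℝ} (hr : 1 ≤ r) {μ : Measure Y} [IsFiniteMeasure μ]
    (hμ : FiniteMomentR r μ) (y : Y) : Integrable (fun x ↦ dist x y ^ r) μ := by
  obtain ⟨y₀, hy₀⟩ := hμ
  refine ((hy₀.add (integrable_const (dist y₀ y ^ r))).const_mul (2 ^ (r - 1))).mono'
    ((measurable_id.dist measurable_const).pow_const r).aestronglyMeasurable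
    (.of_forall fun x ↦ ?_)
  rw [Real.norm_of_nonneg (Real.rpow_nonneg dist_nonneg r)]
  exact dist_rpow_le hr x y₀ y

lemma IsCoupling.integrable_dist_rpow {r : ℝ} (hr : 1 ≤ r) {π : Measure (Y × Y)}
    [IsFiniteMeasure π] {μ ν : Measure Y} (hπ : IsCoupling π μ ν)
    (hμ : FiniteMomentR r μ) (hν : FiniteMomentR r ν) :
    Integrable (fun z : Y × Y ↦ dist z.1 z.2 ^ r) π := by
  obtain ⟨y, hy⟩ := hμ
  have h₁ : Integrable (fun z : Y × Y ↦ dist z.1 y ^ r) π := by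
    rw [← hπ.1] at hy
    exact hy.comp_measurable measurable_fst
  have h₂ : Integrable (fun z : Y × Y ↦ dist z.2 y ^ r) π := by
    rw [← hπ.2] at hν
    exact (hν.integrable_dist_rpow hr y).comp_measurable measurable_snd
  refine ((h₁.add h₂).const_mul (2 ^ (r - 1))).mono'
    ((measurable_fst.dist measurable_snd).pow_const r).aestronglyMeasurable
    (.of_forall fun z ↦ ?_)
  rw [Real.norm_of_nonneg (Real.rpow_nonneg dist_nonneg r), Pi.add_apply, dist_comm z.2 y]
  exact dist_rpow_le hr z.1 y z.2

end Wasserstein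

namespace MeasureTheory.Measure

variable {α β ι : Type*} [MeasurableSpace α] [MeasurableSpace β] [Fintype ι]

lemma compProd_finsetSum_left (μ : ι → Measure α) [∀ i, SFinite (μ i)] (κ : Kernel α β) :
    (∑ i, μ i) ⊗ₘ κ = ∑ i, μ i ⊗ₘ κ := by
  simp_rw [← sum_fintype, compProd_sum_left]

lemma comp_finsetSum (μ : ι → Measure α) (κ : Kernel α β) : κ ∘ₘ (∑ i, μ i) = ∑ i, κ ∘ₘ μ i := by
  simp_rw [← sum_fintype]
  exact bind_sum _ _ κ.aemeasurable

end MeasureTheory.Measure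

theorem kernel_transport_inequality_general {Y : Type*}
    [MeasurableSpace Y] [MetricSpace Y] [PolishSpace Y] [BorelSpace Y] [Nonempty Y]
    (r : ℝ) (hr : 1 ≤ r)
    (p q : Measure Y) (hp : MemPr r p) (hq : MemPr r q)
    (χ : Measure (Y × Y)) [IsFiniteMeasure χ]
    (hχ : IsCoupling χ q p)
    (hopt : ∫ z, dist z.1 z.2 ^ r ∂χ = WrPow r q p)
    (N : ℕ) (m : Fin N → Measure Y)
    (hsum : ∑ i, m i = q) :
    (∑ i, (m i Set.univ).toReal *
        WrPow r ((m i Set.univ)⁻¹ • (m i).bind (fun z => χ.condKernel z))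
          ((m i Set.univ)⁻¹ • m i) ≤ WrPow r p q) ∧
    (∑ i, (m i).bind (fun z => χ.condKernel z)) = p := by
  set κ := χ.condKernel
  have := hq.1
  have : ∀ i, IsFiniteMeasure (m i) := fun i ↦ isFiniteMeasure_of_le q <|
    hsum ▸ Finset.single_le_sum (fun j _ ↦ Measure.zero_le (m j)) (Finset.mem_univ i)
  have hχ_eq : q ⊗ₘ κ = χ := hχ.1 ▸ χ.disintegrate κ
  have hχ_sum : χ = ∑ i, m i ⊗ₘ κ := by rw [← Measure.compProd_finsetSum_left, hsum, hχ_eq]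
  constructor
  · have hint := hχ.integrable_dist_rpow hr hq.2 hp.2
    rw [hχ_sum, integrable_finsetSum_measure] at hint
    calc _ ≤ ∑ i, ∫ z, dist z.1 z.2 ^ r ∂(m i ⊗ₘ κ) :=
          Finset.sum_le_sum fun i _ ↦ toReal_mul_wrPow_comp_le_integral_compProd r (m i) κ
      _ = ∫ z, dist z.1 z.2 ^ r ∂χ := by rw [hχ_sum, integral_finsetSum_measure hint]
      _ = WrPow r p q := hopt.trans (wrPow_comm r q p)
  · calc ∑ i, κ ∘ₘ m i = κ ∘ₘ q := by rw [← Measure.comp_finsetSum, hsum]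
      _ = p := by rw [← Measure.snd_compProd, hχ_eq]; exact hχ.2

/-- **The kernel-transport inequality** (used in the proof of Theorem 2.3): if `χ`
is a `W_r`-optimal coupling of `q` and `p` with disintegration kernel `χ_z`, and
`m_1,…,m_N` are sub-probability measures with `∑ m_i = q`, then pushing each `m_i`
through the kernel, `χm_i := ∫ χ_z m_i(dz)`, satisfies
`∑ m_i(Y) · W_r(χm_i/m_i(Y), m_i/m_i(Y))^r ≤ W_r(p,q)^r` (terms with `m_i(Y) = 0`
contribute `0`) and `∑ χm_i = p`. -/
theorem kernel_transport_inequality {Y : Type*}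
    [MeasurableSpace Y] [MetricSpace Y] [PolishSpace Y] [BorelSpace Y] [Nonempty Y]
    (r : ℝ) (hr : 1 ≤ r)
    (p q : Measure Y) (hp : MemPr r p) (hq : MemPr r q)
    (χ : Measure (Y × Y)) [IsFiniteMeasure χ]
    (hχ : IsCoupling χ q p)
    (hopt : ∫ z, dist z.1 z.2 ^ r ∂χ = WrPow r q p)
    (N : ℕ) (m : Fin N → Measure Y)
    (hsub : ∀ i, m i Set.univ ≤ 1) (hsum : ∑ i, m i = q) :
    (∑ i, (m i Set.univ).toReal *
        WrPow r ((m i Set.univ)⁻¹ • (m i).bind (fun z => χ.condKernel z))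
          ((m i Set.univ)⁻¹ • m i) ≤ WrPow r p q) ∧
    (∑ i, (m i).bind (fun z => χ.condKernel z)) = p :=
  kernel_transport_inequality_general r hr p q hp hq χ hχ hopt N m hsum
end
end
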